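/- arXiv:1012.1261 — 4 statements merged into one kernel-verified Lean document; each statement's English description precedes it below -/
import Mathlib

section
/- The system m̄ = tanh(2β(1-α)n̄ + h₁), n̄ = tanh(2βα m̄ + h₂) with α∈(0,1), β>0, h₁>0, h₂>0 has a unique solution with m̄ ≥ 0 and n̄ ≥ 0, and this solution satisfies m̄ > 0, n̄ > 0. -/
/-!
Eliminating `n̄` turns the system into the fixed-point equation `m = T m` with
`T m = tanh (a * tanh (b * m + h₂) + h₁)`, and `T` maps `[0, 1]` into itself, so it has a fixed
point there. Since `tanh` is concave on `[0, ∞)` and vanishes at `0`, it satisfies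
`tanh (r * y) ≤ r * tanh y` for `r ≥ 1`; the positive fields make this strict for `T`, so
`T (r * m) < r * T m` for `r > 1`. Two positive fixed points `m < m'` would then give
`m' = T ((m' / m) * m) < (m' / m) * T m = m'`.
-/

open Real Set Function

namespace Real

lemma hasDerivAt_tanh (x : ℝ) : HasDerivAt tanh (cosh x ^ 2)⁻¹ x := by
  have h := (hasDerivAt_sinh x).div (hasDerivAt_cosh x) (cosh_pos x).ne'
  rw [show sinh / cosh = tanh from funext fun y => (tanh_eq_sinh_div_cosh y).symm] at h
  refine h.congr_deriv ?_
  rw [← sq, ← sq, cosh_sq_sub_sinh_sq, one_div]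

lemma differentiable_tanh : Differentiable ℝ tanh := fun x => (hasDerivAt_tanh x).differentiableAt

@[fun_prop]
lemma continuous_tanh : Continuous tanh := differentiable_tanh.continuous

lemma deriv_tanh : deriv tanh = fun x => (cosh x ^ 2)⁻¹ := funext fun x => (hasDerivAt_tanh x).deriv

lemma tanh_strictMono : StrictMono tanh :=
  strictMono_of_deriv_pos fun x => by rw [deriv_tanh]; positivity

lemma tanh_pos {x : ℝ} (hx : 0 < x) : 0 < tanh x := by
  simpa using tanh_strictMono hx

lemma concaveOn_tanh : ConcaveOn ℝ (Ici 0) tanh := by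
  refine AntitoneOn.concaveOn_of_deriv (convex_Ici 0) continuous_tanh.continuousOn
    differentiable_tanh.differentiableOn ?_
  rw [interior_Ici, deriv_tanh]
  intro x hx y hy hxy
  have : cosh x ≤ cosh y := by
    rw [cosh_le_cosh, abs_of_pos hx, abs_of_pos hy]; exact hxy
  dsimp only
  gcongr

end Real

lemma ConcaveOn.map_mul_le_mul {f : ℝ → ℝ} (hf : ConcaveOn ℝ (Ici 0) f) (h₀ : 0 ≤ f 0)
    {r x : ℝ} (hr : 1 ≤ r) (hx : 0 ≤ x) : f (r * x) ≤ r * f x := by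
  have hr₀ : 0 < r := zero_lt_one.trans_le hr
  have hr₁ : 0 ≤ 1 - r⁻¹ := sub_nonneg.2 (inv_le_one_of_one_le₀ hr)
  have h := hf.2 (mem_Ici.2 (mul_nonneg hr₀.le hx)) self_mem_Ici (inv_nonneg.2 hr₀.le) hr₁
    (add_sub_cancel _ _)
  simp only [smul_eq_mul, mul_zero, add_zero, inv_mul_cancel_left₀ hr₀.ne'] at h
  calc f (r * x) = r * (r⁻¹ * f (r * x)) := (mul_inv_cancel_left₀ hr₀.ne' _).symm
    _ ≤ r * f x := by gcongr; linarith [mul_nonneg hr₁ h₀]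

lemma eq_of_isFixedPt_of_map_mul_lt_mul {T : ℝ → ℝ}
    (hT : ∀ x, 0 < x → ∀ r, 1 < r → T (r * x) < r * T x) {x y : ℝ} (hx : 0 < x) (hy : 0 < y)
    (hTx : IsFixedPt T x) (hTy : IsFixedPt T y) : x = y := by
  have no_lt : ∀ {x y : ℝ}, 0 < x → IsFixedPt T x → IsFixedPt T y → ¬ x < y := by
    intro x y hx hTx hTy hxy
    have h := hT x hx (y / x) ((one_lt_div hx).2 hxy)
    rw [div_mul_cancel₀ y hx.ne', hTy.eq, hTx.eq, div_mul_cancel₀ y hx.ne'] at h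
    exact h.false
  exact le_antisymm (le_of_not_gt (no_lt hy hTy hTx)) (le_of_not_gt (no_lt hx hTx hTy))

lemma tanh_mul_add_lt_mul {c h x r : ℝ} (hc : 0 ≤ c) (hh : 0 < h) (hx : 0 ≤ x) (hr : 1 < r) :
    tanh (c * (r * x) + h) < r * tanh (c * x + h) :=
  calc tanh (c * (r * x) + h) < tanh (r * (c * x + h)) := tanh_strictMono (by nlinarith)
    _ ≤ r * tanh (c * x + h) :=
      concaveOn_tanh.map_mul_le_mul tanh_zero.ge hr.le (by positivity)

lemma tanh_mul_add_pos {c h x : ℝ} (hc : 0 ≤ c) (hh : 0 < h) (hx : 0 ≤ x) :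
    0 < tanh (c * x + h) :=
  tanh_pos (by positivity)

section TanhSystem

variable {a b h₁ h₂ : ℝ}

lemma tanh_system_pos (ha : 0 ≤ a) (hb : 0 ≤ b) (hh₁ : 0 < h₁) (hh₂ : 0 < h₂) {m n : ℝ}
    (hm : 0 ≤ m) (hn : 0 ≤ n) (hm_eq : m = tanh (a * n + h₁)) (hn_eq : n = tanh (b * m + h₂)) :
    0 < m ∧ 0 < n :=
  ⟨hm_eq ▸ tanh_mul_add_pos ha hh₁ hn, hn_eq ▸ tanh_mul_add_pos hb hh₂ hm⟩

lemma tanh_tanh_mul_lt_mul (ha : 0 ≤ a) (hb : 0 ≤ b) (hh₁ : 0 < h₁) (hh₂ : 0 < h₂) {x r : ℝ}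
    (hx : 0 ≤ x) (hr : 1 < r) :
    tanh (a * tanh (b * (r * x) + h₂) + h₁) < r * tanh (a * tanh (b * x + h₂) + h₁) :=
  calc tanh (a * tanh (b * (r * x) + h₂) + h₁)
      ≤ tanh (a * (r * tanh (b * x + h₂)) + h₁) := by
        have hinner := (tanh_mul_add_lt_mul hb hh₂ hx hr).le
        exact tanh_strictMono.monotone (by gcongr)
    _ < r * tanh (a * tanh (b * x + h₂) + h₁) :=
      tanh_mul_add_lt_mul ha hh₁ (tanh_mul_add_pos hb hh₂ hx).le hr

theorem existsUnique_tanh_system (ha : 0 ≤ a) (hb : 0 ≤ b) (hh₁ : 0 < h₁) (hh₂ : 0 < h₂) :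
    ∃! p : ℝ × ℝ, 0 ≤ p.1 ∧ 0 ≤ p.2 ∧ p.1 = tanh (a * p.2 + h₁) ∧ p.2 = tanh (b * p.1 + h₂) := by
  set T : ℝ → ℝ := fun m => tanh (a * tanh (b * m + h₂) + h₁)
  have hT_pos : ∀ m, 0 ≤ m → 0 < T m := fun m hm =>
    tanh_mul_add_pos ha hh₁ (tanh_mul_add_pos hb hh₂ hm).le
  obtain ⟨m, hm, hTm⟩ : ∃ m ∈ Icc (0 : ℝ) 1, IsFixedPt T m :=
    exists_mem_Icc_isFixedPt (by fun_prop) zero_le_one (hT_pos 0 le_rfl).le (tanh_lt_one _).le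
  refine ⟨(m, tanh (b * m + h₂)),
    ⟨hm.1, (tanh_mul_add_pos hb hh₂ hm.1).le, hTm.symm, rfl⟩, ?_⟩
  rintro ⟨m', n'⟩ ⟨hm', -, hm'_eq, hn'_eq⟩
  dsimp only at hm' hm'_eq hn'_eq
  have hTm' : IsFixedPt T m' := by
    change tanh (a * tanh (b * m' + h₂) + h₁) = m'
    rw [← hn'_eq, hm'_eq]
  have hm'm : m' = m := eq_of_isFixedPt_of_map_mul_lt_mul
    (fun x hx r hr => tanh_tanh_mul_lt_mul ha hb hh₁ hh₂ hx.le hr)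
    (hTm'.eq ▸ hT_pos m' hm') (hTm.eq ▸ hT_pos m hm.1) hTm' hTm
  rw [hn'_eq, hm'm]

end TanhSystem

theorem bipartite_CW_selfconsistency_unique (α β h₁ h₂ : ℝ)
    (hα : α ∈ Set.Ioo (0 : ℝ) 1) (hβ : 0 < β) (hh₁ : 0 < h₁) (hh₂ : 0 < h₂) :
    (∃! p : ℝ × ℝ, 0 ≤ p.1 ∧ 0 ≤ p.2 ∧
        p.1 = Real.tanh (2 * β * (1 - α) * p.2 + h₁) ∧
        p.2 = Real.tanh (2 * β * α * p.1 + h₂)) ∧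
    (∀ p : ℝ × ℝ, 0 ≤ p.1 → 0 ≤ p.2 →
        p.1 = Real.tanh (2 * β * (1 - α) * p.2 + h₁) →
        p.2 = Real.tanh (2 * β * α * p.1 + h₂) → 0 < p.1 ∧ 0 < p.2) := by
  obtain ⟨hα₀, hα₁⟩ := hα
  have ha : 0 ≤ 2 * β * (1 - α) := by have := sub_pos.2 hα₁; positivity
  have hb : 0 ≤ 2 * β * α := by positivity
  exact ⟨existsUnique_tanh_system ha hb hh₁ hh₂,
    fun _ hm hn hm_eq hn_eq => tanh_system_pos ha hb hh₁ hh₂ hm hn hm_eq hn_eq⟩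
end

section
/- If β > 0, α ∈ (0,1), h₁ = h₂ = 0 and 2β√(α(1-α)) ≤ 1, then the only solution of the system m̄ = tanh(2β(1-α)n̄), n̄ = tanh(2βα m̄) is m̄ = n̄ = 0. -/
/-!
Since `x * cosh x - sinh x` has derivative `x * sinh x > 0` for `x > 0`, we get `|tanh x| < |x|`
for `x ≠ 0`. A nonzero solution of `m = tanh (a * n)`, `n = tanh (b * m)` would then satisfy
`|m| < |a| |n| < |a * b| |m|`, which is impossible when `|a * b| ≤ 1`. In the bipartite model
`a * b = (2 β √(α (1 - α)))²`.
-/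

open Real

theorem Real.sinh_lt_mul_cosh {x : ℝ} (hx : 0 < x) : sinh x < x * cosh x := by
  have hmono : StrictMonoOn (fun y : ℝ => y * cosh y - sinh y) (Set.Ici 0) := by
    refine strictMonoOn_of_deriv_pos (convex_Ici 0) (by fun_prop) fun y hy => ?_
    rw [interior_Ici, Set.mem_Ioi] at hy
    have hderiv : HasDerivAt (fun y : ℝ => y * cosh y - sinh y)
        (1 * cosh y + y * sinh y - cosh y) y :=
      ((hasDerivAt_id y).mul (hasDerivAt_cosh y)).sub (hasDerivAt_sinh y)
    rw [hderiv.deriv]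
    nlinarith [sinh_pos_iff.2 hy]
  simpa using hmono Set.self_mem_Ici hx.le hx

theorem Real.abs_tanh_lt_abs {x : ℝ} (hx : x ≠ 0) : |tanh x| < |x| := by
  rw [tanh_eq_sinh_div_cosh, abs_div, abs_sinh, abs_of_pos (cosh_pos x), ← cosh_abs,
    div_lt_iff₀ (cosh_pos _)]
  exact sinh_lt_mul_cosh (abs_pos.2 hx)

theorem eq_zero_of_coupled_tanh {a b m n : ℝ} (hab : |a * b| ≤ 1)
    (hm : m = tanh (a * n)) (hn : n = tanh (b * m)) : m = 0 ∧ n = 0 := by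
  by_cases hm0 : m = 0
  · exact ⟨hm0, by rw [hn, hm0, mul_zero, tanh_zero]⟩
  exfalso
  have han : a * n ≠ 0 := fun h => hm0 (by rw [hm, h, tanh_zero])
  have hn0 : n ≠ 0 := fun h => han (by rw [h, mul_zero])
  have hbm : b * m ≠ 0 := fun h => hn0 (by rw [hn, h, tanh_zero])
  have hmn : |m| < |a| * |n| := by rw [← abs_mul, hm]; exact abs_tanh_lt_abs han
  have hnm : |n| < |b| * |m| := by rw [← abs_mul, hn]; exact abs_tanh_lt_abs hbm
  have : |m| < |m| :=
    calc |m| < |a| * |n| := hmn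
      _ ≤ |a| * (|b| * |m|) := mul_le_mul_of_nonneg_left hnm.le (abs_nonneg a)
      _ = |a * b| * |m| := by rw [abs_mul]; ring
      _ ≤ |m| := mul_le_of_le_one_left (abs_nonneg m) hab
  exact lt_irrefl _ this

theorem bipartite_CW_high_temperature_trivial (α β m n : ℝ)
    (hα : α ∈ Set.Ioo (0 : ℝ) 1) (hβ : 0 < β)
    (hcond : 2 * β * Real.sqrt (α * (1 - α)) ≤ 1)
    (hm : m = Real.tanh (2 * β * (1 - α) * n))
    (hn : n = Real.tanh (2 * β * α * m)) :
    m = 0 ∧ n = 0 := by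
  have hvar : 0 ≤ α * (1 - α) := mul_nonneg hα.1.le (sub_nonneg.2 hα.2.le)
  have hprod : 2 * β * (1 - α) * (2 * β * α) = (2 * β * Real.sqrt (α * (1 - α))) ^ 2 := by
    rw [mul_pow, sq_sqrt hvar]; ring
  refine eq_zero_of_coupled_tanh ?_ hm hn
  rw [hprod, abs_sq]
  exact pow_le_one₀ (by positivity) hcond
end

section
/- For the bipartite Curie-Weiss model with zero external fields, in the thermodynamic limit with N₁/N → α, the pressure satisfies A(α,β) ≤ α A^{CW}(β̄) + (1-α) A^{CW}(β̄) = A^{CW}(β̄), where β̄ = 2β√(α(1-α)) and A^{CW}(β̄) is the Curie-Weiss pressure at inverse temperature β̄. At finite volume: A_{N₁,N₂}(β) ≤ α_N A^{CW}_{N₁}(β') + (1-α_N) A^{CW}_{N₂}(β'') with β' = 2β(1-α_N)a², β'' = 2βα_N/a² and a² = √((1-α_N)/α_N). -/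
noncomputable def spin (b : Bool) : ℝ := if b then 1 else -1

noncomputable def mag {K : ℕ} (σ : Fin K → Bool) : ℝ := (∑ i, spin (σ i)) / K

/-- One-party Curie-Weiss pressure on `K` spins at inverse temperature `b`. -/
noncomputable def Acw (K : ℕ) (b : ℝ) : ℝ :=
  (1 / (K : ℝ)) * Real.log (∑ σ : Fin K → Bool, Real.exp (b * K * (mag σ) ^ 2 / 2))

/-- Bipartite Curie-Weiss pressure (zero external fields). -/
noncomputable def Abip (N₁ N₂ : ℕ) (β : ℝ) : ℝ :=
  (1 / ((N₁ : ℝ) + N₂)) * Real.log (∑ σ : Fin N₁ → Bool, ∑ τ : Fin N₂ → Bool,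
    Real.exp (2 * β * ((N₁ : ℝ) + N₂) * ((N₁ : ℝ) / ((N₁ : ℝ) + N₂)) *
      (1 - (N₁ : ℝ) / ((N₁ : ℝ) + N₂)) * mag σ * mag τ))

/-!
For every `s > 0`, `2xy ≤ s x² + y² / s` bounds the bipartite interaction by a sum of two
Curie-Weiss energies, so the bipartite partition function is at most the product of two
Curie-Weiss partition functions, at inverse temperatures `2β(1-α)s` and `2βα/s`. In the limit,
`s = √(α/(1-α))` makes both temperatures equal to `β̄ = 2β√(α(1-α))`; since `m² ≤ 1`, each
`A^{CW}_K` is `1/2`-Lipschitz in the temperature uniformly in `K`, so the finite-volume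
temperatures may be replaced by `β̄`.
-/

open Finset Filter Topology

lemma abs_spin (b : Bool) : |spin b| = 1 := by
  cases b <;> simp [spin]

lemma mag_sq_le_one {K : ℕ} (σ : Fin K → Bool) : mag σ ^ 2 ≤ 1 := by
  rcases Nat.eq_zero_or_pos K with rfl | hK
  · simp [mag]
  have hK' : (0 : ℝ) < K := by exact_mod_cast hK
  have habs : |mag σ| ≤ 1 := by
    rw [mag, abs_div, Nat.abs_cast, div_le_one hK']
    calc |∑ i, spin (σ i)| ≤ ∑ i, |spin (σ i)| := abs_sum_le_sum_abs _ _
      _ = K := by simp [abs_spin]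
  exact (sq_le_one_iff_abs_le_one _).2 habs

namespace Real

variable {ι κ : Type*} [Fintype ι] [Fintype κ] [Nonempty ι] [Nonempty κ]

lemma log_sum_exp_le_add {f g : ι → ℝ} {c : ℝ} (h : ∀ i, f i ≤ g i + c) :
    log (∑ i, exp (f i)) ≤ log (∑ i, exp (g i)) + c := by
  have hsum : ∑ i, exp (f i) ≤ exp c * ∑ i, exp (g i) := by
    rw [mul_sum]
    exact sum_le_sum fun i _ => by rw [← exp_add, exp_le_exp]; linarith [h i]
  calc log (∑ i, exp (f i)) ≤ log (exp c * ∑ i, exp (g i)) :=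
        log_le_log (by positivity) hsum
    _ = log (∑ i, exp (g i)) + c := by
        rw [log_mul (exp_ne_zero _) (by positivity : (0:ℝ) < _).ne', log_exp, add_comm]

lemma log_sum_sum_exp_le {h : ι → κ → ℝ} {f : ι → ℝ} {g : κ → ℝ}
    (hle : ∀ i j, h i j ≤ f i + g j) :
    log (∑ i, ∑ j, exp (h i j)) ≤ log (∑ i, exp (f i)) + log (∑ j, exp (g j)) := by
  have hsum : ∑ i, ∑ j, exp (h i j) ≤ (∑ i, exp (f i)) * ∑ j, exp (g j) := by
    rw [sum_mul_sum]
    refine sum_le_sum fun i _ => sum_le_sum fun j _ => ?_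
    rw [← exp_add, exp_le_exp]
    exact hle i j
  calc log (∑ i, ∑ j, exp (h i j)) ≤ log ((∑ i, exp (f i)) * ∑ j, exp (g j)) :=
        log_le_log (by positivity) hsum
    _ = _ := log_mul (by positivity) (by positivity)

end Real

lemma two_mul_le_mul_sq_add_sq_div {s : ℝ} (hs : 0 < s) (x y : ℝ) :
    2 * x * y ≤ s * x ^ 2 + y ^ 2 / s := by
  have : 0 ≤ (s * x - y) ^ 2 / s := by positivity
  have expand : (s * x - y) ^ 2 / s = s * x ^ 2 + y ^ 2 / s - 2 * x * y := by
    field_simp; ring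
  linarith

lemma Acw_le_add_abs_sub (K : ℕ) (b b' : ℝ) : Acw K b ≤ Acw K b' + |b - b'| / 2 := by
  have hlog := Real.log_sum_exp_le_add (c := |b - b'| * K / 2)
    (f := fun σ : Fin K → Bool => b * K * mag σ ^ 2 / 2)
    (g := fun σ => b' * K * mag σ ^ 2 / 2) fun σ => by
      have := mul_le_mul (le_abs_self (b - b')) (mag_sq_le_one σ) (sq_nonneg _) (abs_nonneg _)
      have hK : (0 : ℝ) ≤ K := K.cast_nonneg
      nlinarith
  have herr : 1 / (K : ℝ) * (|b - b'| * K / 2) ≤ |b - b'| / 2 := by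
    rcases Nat.eq_zero_or_pos K with rfl | hK
    · simp only [Nat.cast_zero, div_zero, mul_zero, zero_div]
      positivity
    · have : (K : ℝ) ≠ 0 := by positivity
      exact le_of_eq (by field_simp)
  calc Acw K b ≤ 1 / (K : ℝ) * (Real.log (∑ σ : Fin K → Bool, Real.exp (b' * K * mag σ ^ 2 / 2))
        + |b - b'| * K / 2) := mul_le_mul_of_nonneg_left hlog (by positivity)
    _ ≤ Acw K b' + |b - b'| / 2 := by rw [mul_add, Acw]; linarith

lemma Abip_le_Acw_add_Acw {β : ℝ} (hβ : 0 ≤ β) {N₁ N₂ : ℕ} (h₁ : 1 ≤ N₁) (h₂ : 1 ≤ N₂)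
    {s : ℝ} (hs : 0 < s) :
    Abip N₁ N₂ β ≤
      ((N₁ : ℝ) / ((N₁ : ℝ) + N₂)) * Acw N₁ (2 * β * (1 - (N₁ : ℝ) / ((N₁ : ℝ) + N₂)) * s)
        + (1 - (N₁ : ℝ) / ((N₁ : ℝ) + N₂)) * Acw N₂ (2 * β * ((N₁ : ℝ) / ((N₁ : ℝ) + N₂)) / s) := by
  have hN₁ : (0 : ℝ) < N₁ := by exact_mod_cast h₁
  have hN₂ : (0 : ℝ) < N₂ := by exact_mod_cast h₂
  set N : ℝ := (N₁ : ℝ) + N₂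
  have hN : 0 < N := by positivity
  set α := (N₁ : ℝ) / N
  set b₁ := 2 * β * (1 - α) * s
  set b₂ := 2 * β * α / s
  have hc : 0 ≤ β * N₁ * N₂ / N := by positivity
  have hlog : Real.log (∑ σ : Fin N₁ → Bool, ∑ τ : Fin N₂ → Bool,
        Real.exp (2 * β * N * α * (1 - α) * mag σ * mag τ))
      ≤ Real.log (∑ σ : Fin N₁ → Bool, Real.exp (b₁ * N₁ * mag σ ^ 2 / 2))
        + Real.log (∑ τ : Fin N₂ → Bool, Real.exp (b₂ * N₂ * mag τ ^ 2 / 2)) :=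
    Real.log_sum_sum_exp_le fun σ τ =>
      calc 2 * β * N * α * (1 - α) * mag σ * mag τ
          = β * N₁ * N₂ / N * (2 * mag σ * mag τ) := by simp only [α, N]; field_simp; ring
        _ ≤ β * N₁ * N₂ / N * (s * mag σ ^ 2 + mag τ ^ 2 / s) :=
          mul_le_mul_of_nonneg_left (two_mul_le_mul_sq_add_sq_div hs _ _) hc
        _ = b₁ * N₁ * mag σ ^ 2 / 2 + b₂ * N₂ * mag τ ^ 2 / 2 := by
          simp only [b₁, b₂, α, N]; field_simp; ring
  unfold Abip Acw
  calc _ ≤ 1 / N * (Real.log (∑ σ : Fin N₁ → Bool, Real.exp (b₁ * N₁ * mag σ ^ 2 / 2))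
        + Real.log (∑ τ : Fin N₂ → Bool, Real.exp (b₂ * N₂ * mag τ ^ 2 / 2))) :=
        mul_le_mul_of_nonneg_left hlog (by positivity)
    _ = _ := by simp only [α, N]; field_simp; ring

lemma natCast_div_add_mem_Ioo {N₁ N₂ : ℕ} (h₁ : 1 ≤ N₁) (h₂ : 1 ≤ N₂) :
    (N₁ : ℝ) / ((N₁ : ℝ) + N₂) ∈ Set.Ioo 0 1 := by
  have hN₁ : (0 : ℝ) < N₁ := by exact_mod_cast h₁
  have hN₂ : (0 : ℝ) < N₂ := by exact_mod_cast h₂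
  constructor
  · positivity
  · rw [div_lt_one (by positivity)]; linarith

lemma Abip_le_Acw_add_Acw_add_abs_sub {β : ℝ} (hβ : 0 ≤ β) {N₁ N₂ : ℕ} (h₁ : 1 ≤ N₁)
    (h₂ : 1 ≤ N₂) {s : ℝ} (hs : 0 < s) (b : ℝ) :
    Abip N₁ N₂ β ≤
      ((N₁ : ℝ) / ((N₁ : ℝ) + N₂)) * Acw N₁ b + (1 - (N₁ : ℝ) / ((N₁ : ℝ) + N₂)) * Acw N₂ b
        + (|2 * β * (1 - (N₁ : ℝ) / ((N₁ : ℝ) + N₂)) * s - b|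
          + |2 * β * ((N₁ : ℝ) / ((N₁ : ℝ) + N₂)) / s - b|) / 2 := by
  obtain ⟨hα₀, hα₁⟩ := natCast_div_add_mem_Ioo h₁ h₂
  set α := (N₁ : ℝ) / ((N₁ : ℝ) + N₂)
  have hAcw₁ := Acw_le_add_abs_sub N₁ (2 * β * (1 - α) * s) b
  have hAcw₂ := Acw_le_add_abs_sub N₂ (2 * β * α / s) b
  have := Abip_le_Acw_add_Acw hβ h₁ h₂ hs
  nlinarith [abs_nonneg (2 * β * (1 - α) * s - b), abs_nonneg (2 * β * α / s - b)]

lemma exists_balanced_scale {α : ℝ} (hα : α ∈ Set.Ioo 0 1) :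
    ∃ s > 0, (1 - α) * s = √(α * (1 - α)) ∧ α / s = √(α * (1 - α)) := by
  obtain ⟨hα₀, hα₁⟩ := hα
  have hp := Real.sq_sqrt hα₀.le
  have hq := Real.sq_sqrt (sub_pos.2 hα₁).le
  have hp₀ := Real.sqrt_pos.2 hα₀
  have hq₀ := Real.sqrt_pos.2 (sub_pos.2 hα₁)
  refine ⟨√α / √(1 - α), div_pos hp₀ hq₀, ?_, ?_⟩ <;> rw [Real.sqrt_mul hα₀.le]
  · field_simp; rw [hq]
  · field_simp; rw [hp]

theorem bipartite_CW_pressure_upper_bound (β : ℝ) (hβ : 0 < β) :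
    (∀ N₁ N₂ : ℕ, 1 ≤ N₁ → 1 ≤ N₂ →
      Abip N₁ N₂ β ≤
        ((N₁ : ℝ) / ((N₁ : ℝ) + N₂)) *
            Acw N₁ (2 * β * (1 - (N₁ : ℝ) / ((N₁ : ℝ) + N₂)) *
              Real.sqrt ((1 - (N₁ : ℝ) / ((N₁ : ℝ) + N₂)) / ((N₁ : ℝ) / ((N₁ : ℝ) + N₂))))
          + (1 - (N₁ : ℝ) / ((N₁ : ℝ) + N₂)) *
            Acw N₂ (2 * β * ((N₁ : ℝ) / ((N₁ : ℝ) + N₂)) /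
              Real.sqrt ((1 - (N₁ : ℝ) / ((N₁ : ℝ) + N₂)) / ((N₁ : ℝ) / ((N₁ : ℝ) + N₂))))) ∧
    (∀ (α A ACW : ℝ), α ∈ Set.Ioo (0 : ℝ) 1 →
      ∀ n₁ n₂ : ℕ → ℕ,
        Filter.Tendsto n₁ Filter.atTop Filter.atTop →
        Filter.Tendsto n₂ Filter.atTop Filter.atTop →
        Filter.Tendsto (fun k => (n₁ k : ℝ) / ((n₁ k : ℝ) + n₂ k)) Filter.atTop (nhds α) →
        Filter.Tendsto (fun k => Abip (n₁ k) (n₂ k) β) Filter.atTop (nhds A) →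
        Filter.Tendsto (fun k => Acw k (2 * β * Real.sqrt (α * (1 - α)))) Filter.atTop (nhds ACW) →
        A ≤ α * ACW + (1 - α) * ACW) := by
  refine ⟨fun N₁ N₂ h₁ h₂ => ?_, fun α A ACW hα n₁ n₂ hn₁ hn₂ hfrac hA hACW => ?_⟩
  · obtain ⟨hα₀, hα₁⟩ := natCast_div_add_mem_Ioo h₁ h₂
    exact Abip_le_Acw_add_Acw hβ.le h₁ h₂ (Real.sqrt_pos.2 (div_pos (sub_pos.2 hα₁) hα₀))
  obtain ⟨s, hs, hs₁, hs₂⟩ := exists_balanced_scale hα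
  set b := 2 * β * √(α * (1 - α))
  set err : ℝ → ℝ := fun a => (|2 * β * (1 - a) * s - b| + |2 * β * a / s - b|) / 2
  have herr : Tendsto (fun k => err ((n₁ k : ℝ) / ((n₁ k : ℝ) + n₂ k))) atTop (𝓝 0) := by
    have hcont : Continuous err := by fun_prop
    have hα : err α = 0 := by simp [err, b, mul_assoc, mul_div_assoc, hs₁, hs₂]
    rw [← hα]
    exact (hcont.tendsto α).comp hfrac
  have hbound := ((hfrac.mul (hACW.comp hn₁)).add ((hfrac.const_sub 1).mul (hACW.comp hn₂))).add herr
  refine le_of_tendsto_of_tendsto hA (by simpa using hbound) ?_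
  filter_upwards [hn₁.eventually_ge_atTop 1, hn₂.eventually_ge_atTop 1] with k h₁ h₂
    using Abip_le_Acw_add_Acw_add_abs_sub hβ.le h₁ h₂ hs b
end

section
/- Under the change of variables σᵢ ↦ σᵢσ'ᵢ, τⱼ ↦ τⱼτ'ⱼ (a bijection of {-1,1}^{N₁}×{-1,1}^{N₂} for each fixed (σ',τ')), the ratio E[Z²]/E[Z]² for the bipartite spin glass equals 2^{-N} Σ_{σ,τ} exp(2β²N α_N(1-α_N) m(σ)n(τ)), i.e. the normalized partition function of a bipartite Curie-Weiss model at inverse temperature β² (up to the 2^{-N} normalization). -/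
open MeasureTheory ProbabilityTheory

/-! Both moments are Gaussian exponential moments, `𝔼 exp ⟨v, ξ⟩ = exp (‖v‖² / 2)`. Writing
`Z = ∑ₐ exp ⟨vₐ, ξ⟩` with `v_{σ,τ}(i, j) = c σᵢ τⱼ`, `c = β √(2 / N)`, this gives
`𝔼 Z = ∑ₐ exp (‖vₐ‖² / 2)` and `𝔼 Z² = ∑_{a,b} exp (‖vₐ + v_b‖² / 2)`. Since spins square to one,
`‖vₐ‖² = N₁ N₂ c²` for every `a`, and `‖vₐ + v_b‖² / 2 = N₁ N₂ c² + c² (σ · σ') (τ · τ')`.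
For fixed `(σ', τ')` the gauge `σᵢ ↦ σᵢ σ'ᵢ`, `τⱼ ↦ τⱼ τ'ⱼ` permutes the configurations and turns
the overlaps `σ · σ'`, `τ · τ'` into `N₁ m(σ)`, `N₂ n(τ)`, so the replica sum is `2^N` times a
bipartite Curie–Weiss partition function, and the factors `exp (N₁ N₂ c²)` cancel in the ratio. -/

section GaussianExponentialMoments

variable {ι α : Type*} [Fintype ι] [Fintype α]

lemma integral_exp_mul_gaussianReal (t : ℝ) :
    ∫ x, Real.exp (t * x) ∂(gaussianReal 0 1) = Real.exp (t ^ 2 / 2) := by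
  simpa [mgf] using congrFun (mgf_fun_id_gaussianReal (μ := 0) (v := 1)) t

lemma integrable_exp_sum_mul_pi_gaussianReal (g : ι → ℝ) :
    Integrable (fun ξ : ι → ℝ => Real.exp (∑ i, g i * ξ i))
      (Measure.pi fun _ => gaussianReal 0 1) := by
  simp_rw [Real.exp_sum]
  exact Integrable.fintype_prod fun i => integrable_exp_mul_gaussianReal (g i)

lemma integral_exp_sum_mul_pi_gaussianReal (g : ι → ℝ) :
    ∫ ξ, Real.exp (∑ i, g i * ξ i) ∂(Measure.pi fun _ : ι => gaussianReal 0 1)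
      = Real.exp (∑ i, g i ^ 2 / 2) := by
  simp_rw [Real.exp_sum]
  rw [integral_fintype_prod_eq_prod (fun i x => Real.exp (g i * x))]
  simp_rw [integral_exp_mul_gaussianReal]

lemma integral_sum_exp_pi_gaussianReal (v : α → ι → ℝ) :
    ∫ ξ, ∑ a, Real.exp (∑ i, v a i * ξ i) ∂(Measure.pi fun _ : ι => gaussianReal 0 1)
      = ∑ a, Real.exp (∑ i, v a i ^ 2 / 2) := by
  rw [integral_finsetSum _ fun a _ => integrable_exp_sum_mul_pi_gaussianReal (v a)]
  simp_rw [integral_exp_sum_mul_pi_gaussianReal]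

lemma integral_sq_sum_exp_pi_gaussianReal (v : α → ι → ℝ) :
    ∫ ξ, (∑ a, Real.exp (∑ i, v a i * ξ i)) ^ 2 ∂(Measure.pi fun _ : ι => gaussianReal 0 1)
      = ∑ a, ∑ b, Real.exp (∑ i, (v a i + v b i) ^ 2 / 2) := by
  have hsq (ξ : ι → ℝ) : (∑ a, Real.exp (∑ i, v a i * ξ i)) ^ 2
      = ∑ ab : α × α, Real.exp (∑ i, (v ab.1 i + v ab.2 i) * ξ i) := by
    simp_rw [sq, Finset.sum_mul_sum, Fintype.sum_prod_type, ← Real.exp_add,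
      ← Finset.sum_add_distrib, add_mul]
  simp_rw [hsq, integral_sum_exp_pi_gaussianReal, Fintype.sum_prod_type]

end GaussianExponentialMoments

lemma spin_sq (b : Bool) : spin b ^ 2 = 1 := by
  cases b <;> norm_num [spin]

lemma spin_beq (x y : Bool) : spin (x == y) = spin x * spin y := by
  cases x <;> cases y <;> norm_num [spin]

lemma sum_comp_spin_mul_spin {ι M : Type*} [Fintype ι] [DecidableEq ι] [AddCommMonoid M]
    (ρ : ι → Bool) (F : (ι → ℝ) → M) :
    ∑ σ : ι → Bool, F (fun i => spin (σ i) * spin (ρ i))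
      = ∑ σ : ι → Bool, F (fun i => spin (σ i)) := by
  have hflip : Function.Involutive fun (σ : ι → Bool) i => σ i == ρ i := by
    intro σ
    funext i
    dsimp only
    cases σ i <;> cases ρ i <;> rfl
  exact Fintype.sum_bijective _ hflip.bijective _ _ fun σ => by simp only [spin_beq]

lemma sum_spin_eq_mul_mag {K : ℕ} (σ : Fin K → Bool) : ∑ i, spin (σ i) = K * mag σ := by
  rcases Nat.eq_zero_or_pos K with rfl | hK
  · simp
  · rw [mag, mul_div_cancel₀ _ (by positivity)]

section Bipartite

variable {ι κ : Type*} [Fintype ι] [Fintype κ]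

lemma mul_sum_sum_mul_spin_mul_spin (c : ℝ) (ξ : ι × κ → ℝ) (σ : ι → Bool) (τ : κ → Bool) :
    c * ∑ i, ∑ j, ξ (i, j) * spin (σ i) * spin (τ j)
      = ∑ p : ι × κ, c * spin (σ p.1) * spin (τ p.2) * ξ p := by
  rw [Fintype.sum_prod_type, Finset.mul_sum]
  exact Finset.sum_congr rfl fun i _ => by
    rw [Finset.mul_sum]
    exact Finset.sum_congr rfl fun j _ => by ring

lemma sum_sq_spin_mul_spin (c : ℝ) (σ : ι → Bool) (τ : κ → Bool) :
    ∑ p : ι × κ, (c * spin (σ p.1) * spin (τ p.2)) ^ 2 / 2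
      = Fintype.card ι * Fintype.card κ * c ^ 2 / 2 := by
  have hterm (p : ι × κ) : (c * spin (σ p.1) * spin (τ p.2)) ^ 2 / 2 = c ^ 2 / 2 := by
    rw [mul_pow, mul_pow, spin_sq, spin_sq]; ring
  simp only [hterm, Finset.sum_const, Finset.card_univ, Fintype.card_prod, nsmul_eq_mul]
  push_cast
  ring

lemma sum_sq_add_spin_mul_spin (c : ℝ) (σ σ' : ι → Bool) (τ τ' : κ → Bool) :
    ∑ p : ι × κ, (c * spin (σ p.1) * spin (τ p.2) + c * spin (σ' p.1) * spin (τ' p.2)) ^ 2 / 2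
      = Fintype.card ι * Fintype.card κ * c ^ 2
        + c ^ 2 * (∑ i, spin (σ i) * spin (σ' i)) * ∑ j, spin (τ j) * spin (τ' j) := by
  have hterm (p : ι × κ) :
      (c * spin (σ p.1) * spin (τ p.2) + c * spin (σ' p.1) * spin (τ' p.2)) ^ 2 / 2
        = c ^ 2 + c ^ 2 * ((spin (σ p.1) * spin (σ' p.1)) * (spin (τ p.2) * spin (τ' p.2))) := by
    linear_combination (c ^ 2 / 2) * (spin (τ p.2) ^ 2 * spin_sq (σ p.1) + spin_sq (τ p.2)
      + spin (τ' p.2) ^ 2 * spin_sq (σ' p.1) + spin_sq (τ' p.2))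
  rw [Finset.sum_congr rfl fun p _ => hterm p, Finset.sum_add_distrib, Finset.sum_const,
    Finset.card_univ, Fintype.card_prod, nsmul_eq_mul, ← Finset.mul_sum, Fintype.sum_prod_type,
    mul_assoc (c ^ 2), Fintype.sum_mul_sum]
  push_cast
  ring

lemma sum_sum_exp_mul_overlap [DecidableEq ι] [DecidableEq κ] (K : ℝ) :
    ∑ a : (ι → Bool) × (κ → Bool), ∑ b : (ι → Bool) × (κ → Bool),
        Real.exp (K * (∑ i, spin (a.1 i) * spin (b.1 i)) * ∑ j, spin (a.2 j) * spin (b.2 j))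
      = 2 ^ (Fintype.card ι + Fintype.card κ) * ∑ a : (ι → Bool) × (κ → Bool),
          Real.exp (K * (∑ i, spin (a.1 i)) * ∑ j, spin (a.2 j)) := by
  have hgauge (b : (ι → Bool) × (κ → Bool)) :
      ∑ a : (ι → Bool) × (κ → Bool),
          Real.exp (K * (∑ i, spin (a.1 i) * spin (b.1 i)) * ∑ j, spin (a.2 j) * spin (b.2 j))
        = ∑ a : (ι → Bool) × (κ → Bool),
            Real.exp (K * (∑ i, spin (a.1 i)) * ∑ j, spin (a.2 j)) := by
    simp only [Fintype.sum_prod_type]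
    refine (sum_comp_spin_mul_spin b.1 fun x => ∑ τ : κ → Bool,
      Real.exp (K * (∑ i, x i) * ∑ j, spin (τ j) * spin (b.2 j))).trans ?_
    exact Finset.sum_congr rfl fun σ _ =>
      sum_comp_spin_mul_spin b.2 fun y => Real.exp (K * (∑ i, spin (σ i)) * ∑ j, y j)
  rw [Finset.sum_comm, Finset.sum_congr rfl fun b _ => hgauge b, Finset.sum_const,
    Finset.card_univ, nsmul_eq_mul]
  simp [pow_add]

end Bipartite

lemma exp_mul_mul_div_sq_mul_exp_half (A W : ℝ) {k : ℝ} (hk : k ≠ 0) :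
    Real.exp A * (k * W) / (k * Real.exp (A / 2)) ^ 2 = W / k := by
  rw [mul_pow, ← Real.exp_nat_mul, Nat.cast_ofNat, mul_div_cancel₀ A two_ne_zero]
  field_simp

lemma sq_coupling_mul_sum_spin_mul_sum_spin {N₁ N₂ : ℕ} (β : ℝ) (σ : Fin N₁ → Bool)
    (τ : Fin N₂ → Bool) :
    (β * Real.sqrt (2 / (N₁ + N₂))) ^ 2 * (∑ i, spin (σ i)) * ∑ j, spin (τ j)
      = 2 * β ^ 2 * (N₁ + N₂) * (N₁ / (N₁ + N₂)) * (1 - N₁ / (N₁ + N₂)) * mag σ * mag τ := by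
  rw [sum_spin_eq_mul_mag, sum_spin_eq_mul_mag, mul_pow, Real.sq_sqrt (by positivity)]
  rcases eq_or_ne ((N₁ : ℝ) + N₂) 0 with hN | hN
  · have h₁ : (N₁ : ℝ) = 0 := by linarith [N₁.cast_nonneg (α := ℝ), N₂.cast_nonneg (α := ℝ)]
    simp [h₁]
  · field_simp
    ring

theorem bipartite_SG_moment_ratio_general (N₁ N₂ : ℕ) (β : ℝ) :
    let N : ℝ := (N₁ : ℝ) + N₂
    let αN : ℝ := (N₁ : ℝ) / N
    let Z : ((Fin N₁ × Fin N₂ → ℝ)) → ℝ := fun ξ =>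
      ∑ σ : Fin N₁ → Bool, ∑ τ : Fin N₂ → Bool,
        Real.exp (β * Real.sqrt (2 / N) *
          ∑ i : Fin N₁, ∑ j : Fin N₂, ξ (i, j) * spin (σ i) * spin (τ j))
    (∫ ξ, (Z ξ) ^ 2 ∂(Measure.pi fun _ : Fin N₁ × Fin N₂ => gaussianReal 0 1))
        / (∫ ξ, Z ξ ∂(Measure.pi fun _ : Fin N₁ × Fin N₂ => gaussianReal 0 1)) ^ 2
      = (∑ σ : Fin N₁ → Bool, ∑ τ : Fin N₂ → Bool,
          Real.exp (2 * β ^ 2 * N * αN * (1 - αN) * mag σ * mag τ)) / 2 ^ (N₁ + N₂) := by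
  intro N αN Z
  have hZ : Z = fun ξ => ∑ a : (Fin N₁ → Bool) × (Fin N₂ → Bool),
      Real.exp (∑ p, β * Real.sqrt (2 / N) * spin (a.1 p.1) * spin (a.2 p.2) * ξ p) := by
    funext ξ
    simp only [Z, mul_sum_sum_mul_spin_mul_spin, Fintype.sum_prod_type]
  rw [hZ, integral_sq_sum_exp_pi_gaussianReal, integral_sum_exp_pi_gaussianReal]
  simp only [sum_sq_add_spin_mul_spin, sum_sq_spin_mul_spin, Real.exp_add, ← Finset.mul_sum,
    sum_sum_exp_mul_overlap, Finset.sum_const, Finset.card_univ, N, αN,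
    sq_coupling_mul_sum_spin_mul_sum_spin, Fintype.card_prod, Fintype.card_fun, Fintype.card_bool,
    Fintype.card_fin]
  rw [← Fintype.sum_prod_type', nsmul_eq_mul]
  push_cast [← pow_add]
  exact exp_mul_mul_div_sq_mul_exp_half _ _ (by positivity)

theorem bipartite_SG_moment_ratio (N₁ N₂ : ℕ) (hN₁ : 1 ≤ N₁) (hN₂ : 1 ≤ N₂) (β : ℝ) :
    let N : ℝ := (N₁ : ℝ) + N₂
    let αN : ℝ := (N₁ : ℝ) / N
    let Z : ((Fin N₁ × Fin N₂ → ℝ)) → ℝ := fun ξ =>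
      ∑ σ : Fin N₁ → Bool, ∑ τ : Fin N₂ → Bool,
        Real.exp (β * Real.sqrt (2 / N) *
          ∑ i : Fin N₁, ∑ j : Fin N₂, ξ (i, j) * spin (σ i) * spin (τ j))
    (∫ ξ, (Z ξ) ^ 2 ∂(Measure.pi fun _ : Fin N₁ × Fin N₂ => gaussianReal 0 1))
        / (∫ ξ, Z ξ ∂(Measure.pi fun _ : Fin N₁ × Fin N₂ => gaussianReal 0 1)) ^ 2
      = (∑ σ : Fin N₁ → Bool, ∑ τ : Fin N₂ → Bool,
          Real.exp (2 * β ^ 2 * N * αN * (1 - αN) * mag σ * mag τ)) / 2 ^ (N₁ + N₂) :=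
  bipartite_SG_moment_ratio_general N₁ N₂ β
end
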